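/- The flower graph F is bad, i.e., F does not admit a good edge-labeling. -/

import Mathlib

/-- A walk is *increasing* with respect to an edge-labeling if the sequence of labels of its
edges, traversed from the first endpoint to the last, is non-decreasing. -/
def IsIncreasing {V : Type*} (G : SimpleGraph V) (lab : Sym2 V → ℝ) {x y : V}
    (p : G.Walk x y) : Prop :=
  (p.edges.map lab).Chain' (· ≤ ·)

/-- An edge-labeling is *good* if for every ordered pair `(x, y)` of vertices there do not
exist two distinct increasing paths from `x` to `y`. -/
def IsGoodLabeling {V : Type*} (G : SimpleGraph V) (lab : Sym2 V → ℝ) : Prop :=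
  ∀ (x y : V) (p q : G.Walk x y), p.IsPath → q.IsPath →
    IsIncreasing G lab p → IsIncreasing G lab q → p = q

/-- The flower graph: vertices `Sum.inl i` (the five cycle vertices `v_i`) and `Sum.inr i`
(the five extra vertices `c_i`); edges `v_i v_{i+1}` and `c_i v_i`, `c_i v_{i+2}`
(indices modulo `5`). -/
def Flower : SimpleGraph (ZMod 5 ⊕ ZMod 5) :=
  SimpleGraph.fromRel (fun a b =>
    (∃ i : ZMod 5, a = Sum.inl i ∧ b = Sum.inl (i + 1)) ∨
    (∃ i : ZMod 5, a = Sum.inr i ∧ (b = Sum.inl i ∨ b = Sum.inl (i + 2))))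


/-!
Write `a i` for the label of the cycle edge `v i v (i+1)`. If `a i ≤ a (i+1) ≤ a (i+2) ≤ a (i+3)`,
the arc `v i … v (i+4)` and the edge `v i v (i+4)` are two increasing paths. If `a j ≤ a (j+1)`,
the arc `v j v (j+1) v (j+2)` is increasing, so the petal path `v j c j v (j+2)` must strictly
decrease; taking `j = i + 3`, this makes `v i c (i+3) v (i+3)` increasing, which clashes with the
arc `v i … v (i+3)` as soon as `a i ≤ a (i+1) ≤ a (i+2)`. Negating a good labeling gives a good
labeling, and every cyclic sequence of five reals contains one of these two patterns, ascending
or descending.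
-/

open SimpleGraph Walk

section Labeling

variable {V : Type*} {G : SimpleGraph V} {lab : Sym2 V → ℝ}

theorem isIncreasing_iff {x y : V} (p : G.Walk x y) :
    IsIncreasing G lab p ↔ (p.edges.map lab).IsChain (· ≤ ·) :=
  Iff.rfl

theorem isIncreasing_cons_nil {u v : V} (h : G.Adj u v) : IsIncreasing G lab (cons h nil) := by
  simp [isIncreasing_iff]

theorem isIncreasing_cons_cons {u v w x : V} (h : G.Adj u v) (h' : G.Adj v w) (p : G.Walk w x) :
    IsIncreasing G lab (cons h (cons h' p)) ↔
      lab s(u, v) ≤ lab s(v, w) ∧ IsIncreasing G lab (cons h' p) := by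
  simp [isIncreasing_iff, List.isChain_cons_cons]

theorem isIncreasing_neg_iff {x y : V} (p : G.Walk x y) :
    IsIncreasing G (-lab) p ↔ IsIncreasing G lab p.reverse := by
  simp [isIncreasing_iff, List.isChain_reverse, List.isChain_map]

theorem IsGoodLabeling.neg (hg : IsGoodLabeling G lab) : IsGoodLabeling G (-lab) := by
  intro x y p q hp hq hip hiq
  rw [isIncreasing_neg_iff] at hip hiq
  exact reverse_injective (hg y x _ _ hp.reverse hq.reverse hip hiq)

end Labeling

def AscendingRun (a : ZMod 5 → ℝ) (i : ZMod 5) : Prop :=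
  a i ≤ a (i + 1) ∧ a (i + 1) ≤ a (i + 2) ∧ (a (i + 2) ≤ a (i + 3) ∨ a (i + 3) ≤ a (i + 4))

-- Five steps around an odd cycle cannot alternate, so two consecutive steps go the same way, say
-- up from `i`; if no run starts at `i`, the next two steps go strictly down, and then a descending
-- run starts at `i + 2` or an ascending one at `i + 4`.
theorem exists_ascendingRun (a : ZMod 5 → ℝ) : ∃ i, AscendingRun a i ∨ AscendingRun (-a) i := by
  by_contra! h
  simp only [AscendingRun, Pi.neg_apply, neg_le_neg_iff] at h
  have h₀ := h 0; have h₁ := h 1; have h₂ := h 2; have h₃ := h 3; have h₄ := h 4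
  norm_num at h₀ h₁ h₂ h₃ h₄
  reduce_mod_char at h₀ h₁ h₂ h₃ h₄
  grind

namespace Flower

abbrev v (i : ZMod 5) : ZMod 5 ⊕ ZMod 5 := .inl i
abbrev c (i : ZMod 5) : ZMod 5 ⊕ ZMod 5 := .inr i

theorem adj_v_v (i j : ZMod 5) (h : i + 1 = j) : Flower.Adj (v i) (v j) := by
  subst h
  simp [Flower, show (1 : ZMod 5) ≠ 0 by decide]

theorem adj_c_v (i j : ZMod 5) (h : j = i ∨ j = i + 2) : Flower.Adj (c i) (v j) := by
  simp [Flower, h]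

def arc2 (i : ZMod 5) : Flower.Walk (v i) (v (i + 2)) :=
  cons (adj_v_v i (i + 1) rfl) (cons (adj_v_v (i + 1) (i + 2) (by ring)) nil)

def arc3 (i : ZMod 5) : Flower.Walk (v i) (v (i + 3)) :=
  cons (adj_v_v i (i + 1) rfl) (cons (adj_v_v (i + 1) (i + 2) (by ring))
    (cons (adj_v_v (i + 2) (i + 3) (by ring)) nil))

def arc4 (i : ZMod 5) : Flower.Walk (v i) (v (i + 4)) :=
  cons (adj_v_v i (i + 1) rfl) (cons (adj_v_v (i + 1) (i + 2) (by ring))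
    (cons (adj_v_v (i + 2) (i + 3) (by ring)) (cons (adj_v_v (i + 3) (i + 4) (by ring)) nil)))

def chord (i : ZMod 5) : Flower.Walk (v i) (v (i + 4)) :=
  (adj_v_v (i + 4) i (by grind)).symm.toWalk

def petal (i : ZMod 5) : Flower.Walk (v i) (v (i + 2)) :=
  cons (adj_c_v i i (.inl rfl)).symm (cons (adj_c_v i (i + 2) (.inr rfl)) nil)

def petalBack (i : ZMod 5) : Flower.Walk (v i) (v (i + 3)) :=
  cons (adj_c_v (i + 3) i (.inr (by grind))).symm (cons (adj_c_v (i + 3) (i + 3) (.inl rfl)) nil)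

theorem arc2_isPath (i : ZMod 5) : (arc2 i).IsPath := by
  rw [isPath_def]; revert i; decide

theorem arc3_isPath (i : ZMod 5) : (arc3 i).IsPath := by
  rw [isPath_def]; revert i; decide

theorem arc4_isPath (i : ZMod 5) : (arc4 i).IsPath := by
  rw [isPath_def]; revert i; decide

theorem chord_isPath (i : ZMod 5) : (chord i).IsPath := by
  rw [isPath_def]; revert i; decide

theorem petal_isPath (i : ZMod 5) : (petal i).IsPath := by
  rw [isPath_def]; revert i; decide

theorem petalBack_isPath (i : ZMod 5) : (petalBack i).IsPath := by
  rw [isPath_def]; revert i; decide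

theorem arc2_ne_petal (i : ZMod 5) : arc2 i ≠ petal i := by
  simp [arc2, petal]

theorem arc3_ne_petalBack (i : ZMod 5) : arc3 i ≠ petalBack i :=
  fun h => by simpa [arc3, petalBack] using congrArg length h

theorem arc4_ne_chord (i : ZMod 5) : arc4 i ≠ chord i :=
  fun h => by simpa [arc4, chord] using congrArg length h

def cycleLabel (lab : Sym2 (ZMod 5 ⊕ ZMod 5) → ℝ) (i : ZMod 5) : ℝ :=
  lab s(v i, v (i + 1))

variable {lab : Sym2 (ZMod 5 ⊕ ZMod 5) → ℝ}

theorem petal_lt_of_le (hg : IsGoodLabeling Flower lab) (i : ZMod 5)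
    (h : lab s(v i, v (i + 1)) ≤ lab s(v (i + 1), v (i + 2))) :
    lab s(c i, v (i + 2)) < lab s(v i, c i) := by
  by_contra! h'
  refine arc2_ne_petal i (hg _ _ _ _ (arc2_isPath i) (petal_isPath i) ?_ ?_) <;>
    simpa [arc2, petal, isIncreasing_cons_cons, isIncreasing_cons_nil]

theorem not_ascendingRun (hg : IsGoodLabeling Flower lab) (i : ZMod 5) :
    ¬ AscendingRun (cycleLabel lab) i := by
  have e₂ : i + 1 + 1 = i + 2 := by ring
  have e₃ : i + 2 + 1 = i + 3 := by ring
  have e₄ : i + 3 + 1 = i + 4 := by ring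
  have e₅ : i + 4 + 1 = i := by grind
  simp only [AscendingRun, cycleLabel, e₂, e₃, e₄, e₅]
  rintro ⟨h₀, h₁, h₂ | h₃⟩
  · refine arc4_ne_chord i (hg _ _ _ _ (arc4_isPath i) (chord_isPath i) ?_ ?_)
    · simpa [arc4, isIncreasing_cons_cons, isIncreasing_cons_nil] using ⟨h₀, h₁, h₂⟩
    · exact isIncreasing_cons_nil _
  · have e₆ : i + 3 + 2 = i := by grind
    have hc := petal_lt_of_le hg (i + 3)
    rw [e₄, e₆] at hc
    refine arc3_ne_petalBack i (hg _ _ _ _ (arc3_isPath i) (petalBack_isPath i) ?_ ?_)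
    · simpa [arc3, isIncreasing_cons_cons, isIncreasing_cons_nil] using ⟨h₀, h₁⟩
    · simpa [petalBack, isIncreasing_cons_cons, isIncreasing_cons_nil, Sym2.eq_swap]
        using (hc h₃).le

end Flower

/-- The flower graph is bad: it does not admit a good edge-labeling. -/
theorem flower_bad : ¬ ∃ lab : Sym2 (ZMod 5 ⊕ ZMod 5) → ℝ, IsGoodLabeling Flower lab := by
  rintro ⟨lab, hg⟩
  obtain ⟨i, h | h⟩ := exists_ascendingRun (Flower.cycleLabel lab)
  · exact Flower.not_ascendingRun hg i h
  · exact Flower.not_ascendingRun hg.neg i h
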